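/- Let R be a noetherian local 𝔽_q-algebra with maximal ideal 𝔪. Let h ≥ 1 and m ∈ ℤ, and let b ∈ GL_r(R((z))) satisfy b·σ(b)·σ²(b)⋯σ^{h−1}(b) = z^m·1_r. Suppose there exists b₀ ∈ GL_r(𝔽_q((z))) whose image in GL_r(R((z))) is congruent to b modulo 𝔪 (all coefficients of all entries of the difference lie in 𝔪). Then b equals the image of b₀ in GL_r(R((z))). -/

import Mathlib

/-!
Peeling the first or the last factor off `b·σ(b)⋯σ^h(b)` gives `b·σ(P) = P·σ^h(b)` for
`P = b·σ(b)⋯σ^(h-1)(b)`. For `P = z^m·1`, which is central and `σ`-fixed, this forces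
`σ^h(b) = b`: every coefficient of `b` is fixed by `x ↦ x^(q^h)`. So is every element of `𝔽_q`,
and in characteristic `p` this map is additive, so every coefficient `x` of `b - b₀` satisfies
`x^(q^h) = x`. As `x ∈ 𝔪`, the element `1 - x^(q^h - 1)` is a unit, and
`x·(1 - x^(q^h - 1)) = 0` gives `x = 0`.
-/

noncomputable section

open scoped Classical

namespace HVpaper

variable {A : Type*} [CommRing A]

/-- Coefficientwise `q`-th power map on formal Laurent series (the map `σ` for `q ≠ 0`;
junk value `0` for `q = 0`). -/
def laurentFrob (q : ℕ) (x : LaurentSeries A) : LaurentSeries A :=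
  if hq : q = 0 then 0 else x.map (ZeroHom.mk (fun a : A => a ^ q) (zero_pow hq))

/-- Entrywise `σ` on matrices of Laurent series. -/
def matFrob (q : ℕ) {n : Type*} (M : Matrix n n (LaurentSeries A)) :
    Matrix n n (LaurentSeries A) :=
  M.map (laurentFrob q)

/-- `x` lies in `z^n · A⟦z⟧`, i.e. all coefficients below `n` vanish. -/
def InZPow (n : ℤ) (x : LaurentSeries A) : Prop :=
  ∀ m : ℤ, m < n → x.coeff m = 0

/-- `x` lies in the subring `A⟦z⟧` of `A((z))`. -/
def InPS (x : LaurentSeries A) : Prop :=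
  ∀ m : ℤ, m < 0 → x.coeff m = 0

/-- `u` is a unit of the subring `A⟦z⟧` of `A((z))`. -/
def IsPSUnit (u : LaurentSeries A) : Prop :=
  InPS u ∧ ∃ v : LaurentSeries A, InPS v ∧ u * v = 1

/-- The element `z^n` of `A((z))`. -/
def zPow (n : ℤ) : LaurentSeries A :=
  HahnSeries.single n 1

/-- The coefficientwise map on Laurent series induced by a ring homomorphism. -/
def lmap {B : Type*} [CommRing B] (f : A →+* B) (x : LaurentSeries A) : LaurentSeries B :=
  x.map f

variable {k : Type*} [Field k]

/-- Membership in the subgroup `I_n` of `GL_r(k⟦z⟧)`:  `g` and its inverse have entries in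
`k⟦z⟧`, `g ≡ 1 mod z^n` on the diagonal, the entries above the diagonal lie in `z^n k⟦z⟧` and
those below the diagonal lie in `z^(n+1) k⟦z⟧`.  For `n = 0` this is the standard Iwahori
subgroup. -/
def InIwahori {r : ℕ} (n : ℕ) (g : Matrix (Fin r) (Fin r) (LaurentSeries k)) : Prop :=
  (∀ i j, InPS (g i j)) ∧ IsUnit g ∧ (∀ i j, InPS (g⁻¹ i j)) ∧
  (∀ i : Fin r, InZPow (n : ℤ) (g i i - 1)) ∧
  (∀ i j : Fin r, i < j → InZPow (n : ℤ) (g i j)) ∧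
  (∀ i j : Fin r, j < i → InZPow ((n : ℤ) + 1) (g i j))

/-- The sum of the `i` smallest (i.e. last `i`) entries of the nonincreasing tuple `μ`. -/
def lowSum {r : ℕ} (μ : Fin r → ℤ) (i : ℕ) : ℤ :=
  ∑ j : Fin r, if r ≤ (j : ℕ) + i then μ j else 0

/-- The matrix `M` over `A((z))` is bounded by the dominant cocharacter
`μ = (μ 0 ≥ … ≥ μ (r-1))` of `GL_r`: for each `1 ≤ i ≤ r` every `i×i` minor of `M` lies in
`z^(μ_{r-i+1}+⋯+μ_r)·A⟦z⟧` and `det M = z^(μ_1+⋯+μ_r)` times a unit of `A⟦z⟧`. -/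
def BoundedBy {r : ℕ} (μ : Fin r → ℤ) (M : Matrix (Fin r) (Fin r) (LaurentSeries A)) : Prop :=
  (∀ i : Fin r, ∀ ri ci : Fin ((i : ℕ) + 1) → Fin r,
    InZPow (lowSum μ ((i : ℕ) + 1)) ((M.submatrix ri ci).det)) ∧
  (∃ u : LaurentSeries A, IsPSUnit u ∧ M.det = zPow (∑ j, μ j) * u)


/-- The product `c·σ(c)·σ²(c)⋯σ^(h−1)(c)` of a square matrix of Laurent series. -/
def sigmaPowProd (q : ℕ) {r : ℕ} (h : ℕ)
    (c : Matrix (Fin r) (Fin r) (LaurentSeries A)) :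
    Matrix (Fin r) (Fin r) (LaurentSeries A) :=
  ((List.range h).map fun i => (matFrob q)^[i] c).prod

lemma _root_.MonoidHom.mul_map_prod_range_iterate {M : Type*} [Monoid M] (φ : M →* M) (c : M)
    (h : ℕ) :
    c * φ ((List.range h).map fun i => φ^[i] c).prod =
      ((List.range h).map fun i => φ^[i] c).prod * φ^[h] c := by
  have peel_first := congrArg List.prod (congrArg (List.map fun i => φ^[i] c)
    (List.range_succ_eq_map (n := h)))
  have peel_last := congrArg List.prod (congrArg (List.map fun i => φ^[i] c)
    (List.range_succ (n := h)))
  rw [List.map_cons, List.prod_cons, List.map_map] at peel_first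
  rw [List.map_append, List.prod_append, List.map_singleton, List.prod_singleton] at peel_last
  rw [map_list_prod, List.map_map, ← peel_last, peel_first]
  simp only [Function.comp_def, Function.iterate_succ_apply', Function.iterate_zero_apply]

section LaurentFrobenius

variable {B : Type*} [CommRing B]

def lmapRingHom (f : A →+* B) : LaurentSeries A →+* LaurentSeries B where
  toFun := lmap f
  map_one' := HahnSeries.map_one f.toMonoidWithZeroHom
  map_mul' _ _ := HahnSeries.map_mul f.toNonUnitalRingHom
  map_zero' := by ext; simp [lmap]
  map_add' _ _ := HahnSeries.map_add f.toAddMonoidHom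

@[simp]
lemma coeff_lmap (f : A →+* B) (x : LaurentSeries A) (n : ℤ) :
    (lmap f x).coeff n = f (x.coeff n) :=
  rfl

lemma lmap_zPow (f : A →+* B) (n : ℤ) : lmap f (zPow n) = zPow n := by
  ext k
  simp only [coeff_lmap, zPow, HahnSeries.coeff_single]
  split_ifs <;> simp

lemma isUnit_zPow (n : ℤ) : IsUnit (zPow n : LaurentSeries A) := by
  refine IsUnit.of_mul_eq_one (zPow (-n)) ?_
  rw [zPow, zPow, HahnSeries.single_mul_single, add_neg_cancel, one_mul,
    HahnSeries.single_zero_one]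

lemma coeff_laurentFrob {q : ℕ} (hq : q ≠ 0) (x : LaurentSeries A) (n : ℤ) :
    (laurentFrob q x).coeff n = x.coeff n ^ q := by
  rw [laurentFrob, dif_neg hq]
  rfl

lemma coeff_matFrob_iterate_apply {q : ℕ} (hq : q ≠ 0) {ι : Type*}
    (M : Matrix ι ι (LaurentSeries A)) (i j : ι) (n : ℤ) (k : ℕ) :
    (((matFrob q)^[k] M) i j).coeff n = (M i j).coeff n ^ q ^ k := by
  induction k with
  | zero => simp
  | succ k ih =>
    rw [Function.iterate_succ_apply', matFrob, Matrix.map_apply, coeff_laurentFrob hq, ih,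
      pow_succ, pow_mul]

variable (p e : ℕ) [ExpChar A p]

lemma laurentFrob_eq_lmap_iterateFrobenius :
    laurentFrob (p ^ e) = lmap (iterateFrobenius A p e) := by
  ext x n
  rw [coeff_laurentFrob (expChar_pow_pos A p e).ne', coeff_lmap, iterateFrobenius_def]

lemma matFrob_eq_mapMatrix {ι : Type*} [Fintype ι] [DecidableEq ι] :
    matFrob (A := A) (n := ι) (p ^ e) = (lmapRingHom (iterateFrobenius A p e)).mapMatrix := by
  ext M i j : 2
  simp only [matFrob, RingHom.mapMatrix_apply, Matrix.map_apply,
    laurentFrob_eq_lmap_iterateFrobenius]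
  rfl

variable {r : ℕ}

lemma mul_matFrob_sigmaPowProd (h : ℕ) (c : Matrix (Fin r) (Fin r) (LaurentSeries A)) :
    c * matFrob (p ^ e) (sigmaPowProd (p ^ e) h c) =
      sigmaPowProd (p ^ e) h c * (matFrob (p ^ e))^[h] c := by
  rw [sigmaPowProd, matFrob_eq_mapMatrix]
  have := (lmapRingHom (iterateFrobenius A p e)).mapMatrix.toMonoidHom.mul_map_prod_range_iterate
    c h
  exact this

lemma matFrob_smul_one {ι : Type*} [DecidableEq ι] (m : ℤ) :
    matFrob (p ^ e) ((zPow m : LaurentSeries A) • 1 : Matrix ι ι (LaurentSeries A)) =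
      (zPow m : LaurentSeries A) • 1 := by
  rw [Matrix.smul_one_eq_diagonal, matFrob, laurentFrob_eq_lmap_iterateFrobenius,
    Matrix.diagonal_map (f := lmap _) (map_zero (lmapRingHom (iterateFrobenius A p e))),
    lmap_zPow]

lemma matFrob_iterate_eq_self_of_sigmaPowProd_eq_smul_one {h : ℕ} {m : ℤ}
    {b : Matrix (Fin r) (Fin r) (LaurentSeries A)}
    (hb : sigmaPowProd (p ^ e) h b = (zPow m : LaurentSeries A) • 1) :
    (matFrob (p ^ e))^[h] b = b := by
  have key := mul_matFrob_sigmaPowProd p e h b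
  rw [hb, matFrob_smul_one, Matrix.mul_smul, Matrix.smul_mul, mul_one, one_mul] at key
  exact ((isUnit_zPow m).smul_left_cancel.mp key).symm

end LaurentFrobenius

lemma _root_.IsLocalRing.eq_zero_of_pow_eq_self {R : Type*} [CommRing R] [IsLocalRing R] {x : R}
    (hx : x ∈ IsLocalRing.maximalIdeal R) {N : ℕ} (hN : 1 < N) (hxN : x ^ N = x) : x = 0 := by
  have hunit : IsUnit (1 - x ^ (N - 1)) :=
    IsLocalRing.isUnit_one_sub_self_of_mem_nonunits _ (Ideal.pow_mem_of_mem _ hx _ (by omega))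
  refine hunit.mul_left_eq_zero.mp ?_
  rw [mul_sub, mul_one, ← pow_succ', Nat.sub_add_cancel hN.le, hxN, sub_self]

lemma _root_.GaloisField.pow_card_pow (p : ℕ) [Fact p.Prime] {e : ℕ} (he : e ≠ 0)
    (a : GaloisField p e) (k : ℕ) : a ^ (p ^ e) ^ k = a := by
  have := Fintype.ofFinite (GaloisField p e)
  rw [← GaloisField.card p e he, Nat.card_eq_fintype_card]
  exact FiniteField.pow_card_pow k a

theorem descent_to_Fq_general
    {p : ℕ} [Fact p.Prime] {e : ℕ} (he : 1 ≤ e) {q : ℕ} (hq : q = p ^ e)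
    {R : Type*} [CommRing R] [Algebra (GaloisField p e) R]
    [IsLocalRing R]
    {r : ℕ}
    (h : ℕ) (hh : 1 ≤ h) (m : ℤ)
    (b : Matrix (Fin r) (Fin r) (LaurentSeries R))
    (hpow : sigmaPowProd q h b =
      (zPow m : LaurentSeries R) • (1 : Matrix (Fin r) (Fin r) (LaurentSeries R)))
    (b₀ : Matrix (Fin r) (Fin r) (LaurentSeries (GaloisField p e)))
    (hcong : ∀ (i j : Fin r) (n : ℤ),
      ((b - b₀.map (lmap (algebraMap (GaloisField p e) R))) i j).coeff n ∈
        IsLocalRing.maximalIdeal R) :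
    b = b₀.map (lmap (algebraMap (GaloisField p e) R)) := by
  subst hq
  have hp : p.Prime := Fact.out
  have : CharP R p := charP_of_injective_algebraMap' (GaloisField p e) p
  have : ExpChar R p := .prime hp
  have hb_fixed := matFrob_iterate_eq_self_of_sigmaPowProd_eq_smul_one p e hpow
  ext i j n
  refine sub_eq_zero.mp (IsLocalRing.eq_zero_of_pow_eq_self (hcong i j n) (N := (p ^ e) ^ h)
    (Nat.one_lt_pow (by omega) (Nat.one_lt_pow (by omega) hp.one_lt)) ?_)
  rw [← pow_mul, sub_pow_expChar_pow, pow_mul,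
    ← coeff_matFrob_iterate_apply (expChar_pow_pos R p e).ne', hb_fixed]
  simp only [Matrix.map_apply, coeff_lmap, ← map_pow,
    GaloisField.pow_card_pow p (by omega : e ≠ 0)]

/-- The final descent step in the proof of **Proposition 7.1** for `G = GL_r`:  a local shtuka
over a noetherian local `𝔽_q`-algebra whose `h`-fold `σ`-power equals the central element
`z^m·1` and whose reduction modulo the maximal ideal is defined over `𝔽_q` is itself defined
over `𝔽_q`. -/
theorem descent_to_Fq
    {p : ℕ} [Fact p.Prime] {e : ℕ} (he : 1 ≤ e) {q : ℕ} (hq : q = p ^ e)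
    {R : Type*} [CommRing R] [Algebra (GaloisField p e) R]
    [IsNoetherianRing R] [IsLocalRing R]
    {r : ℕ} (hr : 1 ≤ r)
    (h : ℕ) (hh : 1 ≤ h) (m : ℤ)
    (b : Matrix (Fin r) (Fin r) (LaurentSeries R)) (hb : IsUnit b)
    (hpow : sigmaPowProd q h b =
      (zPow m : LaurentSeries R) • (1 : Matrix (Fin r) (Fin r) (LaurentSeries R)))
    (b₀ : Matrix (Fin r) (Fin r) (LaurentSeries (GaloisField p e))) (hb₀ : IsUnit b₀)
    (hcong : ∀ (i j : Fin r) (n : ℤ),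
      ((b - b₀.map (lmap (algebraMap (GaloisField p e) R))) i j).coeff n ∈
        IsLocalRing.maximalIdeal R) :
    b = b₀.map (lmap (algebraMap (GaloisField p e) R)) :=
  descent_to_Fq_general he hq h hh m b hpow b₀ hcong

end HVpaper
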